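/- arXiv:1901.09289 — 2 statements merged into one kernel-verified Lean document; each statement's English description precedes it below -/
import Mathlib

section
/- Let H and K be complex Hilbert spaces, and let S ⊆ ℂ be a set that is symmetric under complex conjugation (z ∈ S implies z̄ ∈ S). Let G : S → B(K, H) and M : S → B(K) be families of bounded linear operators such that (i) M(z)* = M(z̄) for every z ∈ S, (ii) M(z) − M(w) = (z − w)·G(w̄)* ∘ G(z) for all z, w ∈ S, and (iii) for every z ∈ S the adjoint G(z)* : H → K is surjective. Then for every z ∈ S with Im z ≠ 0 and every φ ∈ K with φ ≠ 0, one has Im⟨φ, M(z)φ⟩ ≠ 0. -/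
open scoped ComplexInnerProductSpace
open ContinuousLinearMap

/-- For families `M z` and `G z` of bounded operators on complex Hilbert
spaces satisfying `M z * = M z̄`, `M z - M w = (z - w) • (G w̄)* ∘ G z` on a
conjugation-symmetric set `S`, with `(G z)*` surjective, one has
`Im ⟪φ, M z φ⟫ ≠ 0` for every `z ∈ S` with `Im z ≠ 0` and every `φ ≠ 0`. -/
theorem imaginary_part_nonzero
    {H K : Type*} [NormedAddCommGroup H] [InnerProductSpace ℂ H] [CompleteSpace H]
    [NormedAddCommGroup K] [InnerProductSpace ℂ K] [CompleteSpace K]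
    (S : Set ℂ) (hS : ∀ z ∈ S, (starRingEnd ℂ) z ∈ S)
    (G : ℂ → (K →L[ℂ] H)) (M : ℂ → (K →L[ℂ] K))
    (hM1 : ∀ z ∈ S, ContinuousLinearMap.adjoint (M z) = M ((starRingEnd ℂ) z))
    (hM2 : ∀ z ∈ S, ∀ w ∈ S,
      M z - M w = (z - w) •
        (ContinuousLinearMap.adjoint (G ((starRingEnd ℂ) w)) ∘L G z))
    (hG : ∀ z ∈ S, Function.Surjective (ContinuousLinearMap.adjoint (G z))) :
    ∀ z ∈ S, z.im ≠ 0 → ∀ φ : K, φ ≠ 0 → (⟪φ, M z φ⟫).im ≠ 0 := by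
  intro z hz him φ hφ
  have hzb : (starRingEnd ℂ) z ∈ S := hS z hz
  -- G z φ ≠ 0
  have hGφ : G z φ ≠ 0 := by
    intro h0
    apply hφ
    have : ∀ ξ : K, ⟪ξ, φ⟫ = 0 := by
      intro ξ
      obtain ⟨h, rfl⟩ := hG z hz ξ
      rw [ContinuousLinearMap.adjoint_inner_left, h0, inner_zero_right]
    simpa using (this φ)
  -- key identity from hM2 with w = conj z
  have key := hM2 z hz ((starRingEnd ℂ) z) hzb
  rw [Complex.conj_conj] at key
  have key2 : ⟪φ, (M z - M ((starRingEnd ℂ) z)) φ⟫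
      = (z - (starRingEnd ℂ) z) * ⟪G z φ, G z φ⟫ := by
    rw [key]
    simp only [ContinuousLinearMap.smul_apply, ContinuousLinearMap.comp_apply,
      inner_smul_right, ContinuousLinearMap.adjoint_inner_right]
  -- ⟪φ, M z̄ φ⟫ = conj ⟪φ, M z φ⟫
  have hconj : ⟪φ, M ((starRingEnd ℂ) z) φ⟫ = (starRingEnd ℂ) ⟪φ, M z φ⟫ := by
    rw [← hM1 z hz, ContinuousLinearMap.adjoint_inner_right, ← inner_conj_symm]
  have key3 : ⟪φ, M z φ⟫ - (starRingEnd ℂ) ⟪φ, M z φ⟫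
      = (z - (starRingEnd ℂ) z) * ⟪G z φ, G z φ⟫ := by
    rw [← hconj, ← key2]
    simp [inner_sub_right]
  set c := ⟪φ, M z φ⟫ with hc
  have him3 : (c - (starRingEnd ℂ) c).im = 2 * c.im := by
    simp [Complex.sub_im, Complex.conj_im]; ring
  have hnorm : ⟪G z φ, G z φ⟫ = (‖G z φ‖ : ℂ) ^ 2 := by
    rw [inner_self_eq_norm_sq_to_K]; norm_num
  have him4 : ((z - (starRingEnd ℂ) z) * ⟪G z φ, G z φ⟫).im
      = 2 * z.im * ‖G z φ‖ ^ 2 := by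
    rw [hnorm]
    simp [Complex.mul_im, Complex.sub_im, Complex.sub_re, Complex.conj_im,
      Complex.conj_re]
    rw [← Complex.ofReal_pow, Complex.ofReal_re]
    ring
  have : 2 * c.im = 2 * z.im * ‖G z φ‖ ^ 2 := by
    rw [← him3, key3, him4]
  have hn : ‖G z φ‖ ^ 2 ≠ 0 := pow_ne_zero _ (norm_ne_zero_iff.mpr hGφ)
  have hne : 2 * z.im * ‖G z φ‖ ^ 2 ≠ 0 :=
    mul_ne_zero (mul_ne_zero two_ne_zero him) hn
  intro h
  rw [h, mul_zero] at this
  exact hne this.symm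
end

section
/- Let H be a complex Hilbert space and let C : H → H be a bounded linear operator such that Im⟨φ, Cφ⟩ ≠ 0 for every φ ∈ H with φ ≠ 0. Suppose C has a decomposition C = C₀ + K, where C₀ is self-adjoint and coercive (there exists c > 0 with |⟨φ, C₀φ⟩| ≥ c‖φ‖² for all φ) and K is a compact operator. Then C is coercive, i.e., there exists c' > 0 such that |⟨φ, Cφ⟩| ≥ c'‖φ‖² for all φ ∈ H. -/
open scoped ComplexInnerProductSpace
open ContinuousLinearMap

/-!
If `C` were not coercive, there would be unit vectors `uₙ` with `⟪uₙ, C uₙ⟫ → 0`. Along an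
ultrafilter (which replaces the extraction of a subsequence, as `H` need not be separable) the
`uₙ` converge weakly to some `φ`, by Banach–Alaoglu and the Riesz representation. The compact
operator `K` turns this into `K uₙ → K φ` in norm, hence `⟪uₙ, K uₙ⟫ → ⟪φ, K φ⟫` and
`⟪uₙ, C₀ uₙ⟫ → -⟪φ, K φ⟫`. Since `C₀` is self-adjoint the left side is real, so
`Im ⟪φ, C φ⟫ = Im ⟪φ, K φ⟫ = 0` and therefore `φ = 0`. But then `⟪uₙ, C₀ uₙ⟫ → 0`, contradicting
`|⟪uₙ, C₀ uₙ⟫| ≥ c`.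
-/

open Filter Metric Topology RCLike
open scoped InnerProductSpace

section

variable {𝕜 E F : Type*} [RCLike 𝕜] [NormedAddCommGroup E] [InnerProductSpace 𝕜 E]
  [NormedAddCommGroup F] [InnerProductSpace 𝕜 F] {ι : Type*}

theorem norm_inner_smul_apply_smul (T : E →L[𝕜] E) (a : 𝕜) (x : E) :
    ‖⟪a • x, T (a • x)⟫_𝕜‖ = ‖a‖ ^ 2 * ‖⟪x, T x⟫_𝕜‖ := by
  rw [map_smul, inner_smul_left, inner_smul_right, norm_mul, norm_mul, norm_conj, sq, mul_assoc]

theorem exists_norm_eq_one_tendsto_inner_apply_self_zero {T : E →L[𝕜] E}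
    (hT : ∀ c > 0, ∃ x : E, ‖⟪x, T x⟫_𝕜‖ < c * ‖x‖ ^ 2) :
    ∃ u : ℕ → E, (∀ n, ‖u n‖ = 1) ∧ Tendsto (fun n ↦ ⟪u n, T (u n)⟫_𝕜) atTop (𝓝 0) := by
  have hunit : ∀ n : ℕ, ∃ u : E, ‖u‖ = 1 ∧ ‖⟪u, T u⟫_𝕜‖ < 1 / (n + 1) := by
    intro n
    obtain ⟨x, hx⟩ := hT (1 / (n + 1)) (by positivity)
    have hx0 : ‖x‖ ≠ 0 := by
      intro h
      simp [norm_eq_zero.1 h] at hx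
    refine ⟨((‖x‖⁻¹ : ℝ) : 𝕜) • x, by simp [norm_smul, hx0], ?_⟩
    rw [norm_inner_smul_apply_smul, norm_algebraMap', norm_inv, norm_norm, inv_pow,
      inv_mul_lt_iff₀ (by positivity), mul_comm]
    exact hx
  choose u hu1 hu using hunit
  refine ⟨u, hu1, tendsto_zero_iff_norm_tendsto_zero.2 ?_⟩
  exact squeeze_zero (fun _ ↦ norm_nonneg _) (fun n ↦ (hu n).le)
    tendsto_one_div_add_atTop_nhds_zero_nat

theorem Ultrafilter.exists_forall_tendsto_inner_of_norm_le [CompleteSpace E] (l : Ultrafilter ι)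
    {u : ι → E} {R : ℝ} (hu : ∀ i, ‖u i‖ ≤ R) :
    ∃ φ : E, ∀ y, Tendsto (fun i ↦ ⟪u i, y⟫_𝕜) l (𝓝 ⟪φ, y⟫_𝕜) := by
  let g : ι → WeakDual 𝕜 E := fun i ↦ StrongDual.toWeakDual (InnerProductSpace.toDual 𝕜 E (u i))
  have hg : ∀ i, g i ∈ WeakDual.toStrongDual ⁻¹' closedBall 0 R := fun i ↦ by
    simpa [g] using hu i
  obtain ⟨ℓ, -, hℓ⟩ := (WeakDual.isCompact_closedBall 0 R).ultrafilter_le_nhds' (l.map g)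
    (Ultrafilter.mem_map.2 (univ_mem' hg))
  refine ⟨(InnerProductSpace.toDual 𝕜 E).symm (WeakDual.toStrongDual ℓ), fun y ↦ ?_⟩
  rw [InnerProductSpace.toDual_symm_apply]
  exact tendsto_iff_forall_eval_tendsto_topDualPairing.1 hℓ y

theorem IsCompactOperator.tendsto_of_forall_tendsto_inner [CompleteSpace E] [CompleteSpace F]
    {K : E →L[𝕜] F} (hK : IsCompactOperator K) (l : Ultrafilter ι) {u : ι → E} {R : ℝ}
    (hu : ∀ i, ‖u i‖ ≤ R) {φ : E} (hφ : ∀ y, Tendsto (fun i ↦ ⟪u i, y⟫_𝕜) l (𝓝 ⟪φ, y⟫_𝕜)) :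
    Tendsto (fun i ↦ K (u i)) l (𝓝 (K φ)) := by
  obtain ⟨S, hS, hKS⟩ := hK.image_closedBall_subset_compact (f := (K : E →ₗ[𝕜] F)) R
  have hmem : ∀ i, K (u i) ∈ S := fun i ↦ hKS ⟨u i, by simpa using hu i, rfl⟩
  obtain ⟨ψ, -, hψ⟩ :=
    hS.ultrafilter_le_nhds' (l.map fun i ↦ K (u i)) (Ultrafilter.mem_map.2 (univ_mem' hmem))
  suffices ψ = K φ from this ▸ hψ
  refine ext_inner_left 𝕜 fun y ↦ tendsto_nhds_unique (tendsto_const_nhds.inner hψ) ?_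
  have := (continuous_conj.tendsto _).comp (hφ (adjoint K y))
  simpa only [Function.comp_def, inner_conj_symm, adjoint_inner_right] using this

theorem tendsto_inner_of_forall_tendsto_inner_of_tendsto {l : Filter ι} {u v : ι → E} {R : ℝ}
    (hu : ∀ i, ‖u i‖ ≤ R) {φ ψ : E} (hφ : ∀ y, Tendsto (fun i ↦ ⟪u i, y⟫_𝕜) l (𝓝 ⟪φ, y⟫_𝕜))
    (hv : Tendsto v l (𝓝 ψ)) : Tendsto (fun i ↦ ⟪u i, v i⟫_𝕜) l (𝓝 ⟪φ, ψ⟫_𝕜) := by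
  have hbound : ∀ i, ‖⟪u i, v i - ψ⟫_𝕜‖ ≤ R * ‖v i - ψ‖ := fun i ↦
    (norm_inner_le_norm _ _).trans (mul_le_mul_of_nonneg_right (hu i) (norm_nonneg _))
  have hdiff : Tendsto (fun i ↦ ⟪u i, v i - ψ⟫_𝕜) l (𝓝 0) := by
    refine tendsto_zero_iff_norm_tendsto_zero.2 (squeeze_zero (fun _ ↦ norm_nonneg _) hbound ?_)
    simpa using (tendsto_sub_nhds_zero_iff.2 hv).norm.const_mul R
  simpa [inner_sub_right] using hdiff.add (hφ ψ)

theorem IsSelfAdjoint.im_eq_zero_of_tendsto_inner_apply_self [CompleteSpace E] {T : E →L[𝕜] E}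
    (hT : IsSelfAdjoint T) {l : Filter ι} [l.NeBot] {u : ι → E} {z : 𝕜}
    (h : Tendsto (fun i ↦ ⟪u i, T (u i)⟫_𝕜) l (𝓝 z)) : im z = 0 :=
  (isClosed_eq continuous_im continuous_const).mem_of_tendsto h
    (Eventually.of_forall fun x ↦ hT.isSymmetric.im_inner_self_apply (u x))

end

/-- Coercivity criterion: if `C = C₀ + K` with `C₀` self-adjoint and
coercive and `K` compact, and `Im ⟪φ, C φ⟫ ≠ 0` for every `φ ≠ 0`, then `C` is
coercive. -/
theorem coercivity_criterion
    {H : Type*} [NormedAddCommGroup H] [InnerProductSpace ℂ H] [CompleteSpace H]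
    (C C₀ K : H →L[ℂ] H)
    (hIm : ∀ φ : H, φ ≠ 0 → (⟪φ, C φ⟫).im ≠ 0)
    (hsum : C = C₀ + K)
    (hsa : IsSelfAdjoint C₀)
    (c : ℝ) (hc : 0 < c)
    (hcoer : ∀ φ : H, c * ‖φ‖ ^ 2 ≤ ‖⟪φ, C₀ φ⟫‖)
    (hK : IsCompactOperator (⇑K)) :
    ∃ c' > 0, ∀ φ : H, c' * ‖φ‖ ^ 2 ≤ ‖⟪φ, C φ⟫‖ := by
  by_contra! hC
  obtain ⟨u, hu1, hCu⟩ := exists_norm_eq_one_tendsto_inner_apply_self_zero (T := C) hC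
  let l := Ultrafilter.of (atTop : Filter ℕ)
  have hu : ∀ n, ‖u n‖ ≤ 1 := fun n ↦ (hu1 n).le
  obtain ⟨φ, hφ⟩ := l.exists_forall_tendsto_inner_of_norm_le (𝕜 := ℂ) hu
  have hKu := tendsto_inner_of_forall_tendsto_inner_of_tendsto hu hφ
    (hK.tendsto_of_forall_tendsto_inner l hu hφ)
  have hC₀u : Tendsto (fun n ↦ ⟪u n, C₀ (u n)⟫) l (𝓝 (-⟪φ, K φ⟫)) := by
    simpa [hsum, inner_add_right] using ((hCu.mono_left (Ultrafilter.of_le _)).sub hKu)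
  have hφ0 : φ = 0 := by
    by_contra hφ0
    apply hIm φ hφ0
    have hC₀φ := hsa.isSymmetric.im_inner_self_apply φ
    have hKφ := hsa.im_eq_zero_of_tendsto_inner_apply_self hC₀u
    simp only [coe_coe, RCLike.im_to_complex, Complex.neg_im, neg_eq_zero] at hC₀φ hKφ
    simp [hsum, hC₀φ, hKφ]
  have hlim : c ≤ ‖-⟪φ, K φ⟫‖ := ge_of_tendsto' hC₀u.norm fun n ↦ by simpa [hu1 n] using hcoer (u n)
  simp [hφ0] at hlim
  linarith
end
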